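/- arXiv:1406.7274 — 5 statements merged into one kernel-verified Lean document; each statement's English description precedes it below -/
import Mathlib

section
/- The system A_i • X = 0 (i = 1,…,k), A_{k+1} • X = −1, X ⪰ 0 is infeasible, where for each i ≤ k+1 the matrix A_i has identity block I_{r_i} in rows/columns r_1+⋯+r_{i−1}+1 through r_1+⋯+r_i, zeros in the lower-right (n − r_1 − ⋯ − r_i)-block, arbitrary entries elsewhere in the first r_1+⋯+r_{i−1} rows/columns, with r_1,…,r_k > 0 and r_{k+1} ≥ 0. That is, no positive semidefinite X satisfies all k+1 equations. -/
/-!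
Induction on the blocks: if `X ⪰ 0` has zero diagonal on the first `s_{i-1}` indices, then its
rows and columns there vanish, so `A_i • X` only sees the diagonal of `A_i` beyond them, i.e. it is
the trace of the diagonal block of `X` on the indices `s_{i-1} ≤ j < s_i`. For `i ≤ k` this trace
is `0`, which forces those diagonal entries of `X` to vanish; for `i = k + 1` it is `≥ 0`,
contradicting `A_{k+1} • X = -1`.
-/

open Finset Matrix

open scoped ComplexOrder in
theorem Matrix.PosSemidef.apply_eq_zero_of_diag_eq_zero {ι 𝕜 : Type*} [Fintype ι] [RCLike 𝕜]
    {X : Matrix ι ι 𝕜} (hX : X.PosSemidef) {j : ι} (hj : X j j = 0) (l : ι) :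
    X l j = 0 ∧ X j l = 0 := by
  classical
  have hcol : X *ᵥ Pi.single j 1 = 0 :=
    (hX.dotProduct_mulVec_zero_iff _).mp (by simp [hj])
  have hlj : X l j = 0 := by simpa using congrFun hcol l
  exact ⟨hlj, by rw [← hX.1.apply j l, hlj, star_zero]⟩

theorem Matrix.trace_mul_eq_sum_diag_mul_diag {ι R : Type*} [Fintype ι]
    [NonUnitalNonAssocSemiring R] {A X : Matrix ι ι R} (p : ι → Prop)
    (hX : ∀ j l, p j ∨ p l → X j l = 0) (hA : ∀ j l, j ≠ l → ¬p j → ¬p l → A j l = 0) :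
    trace (A * X) = ∑ j, A j j * X j j := by
  refine sum_congr rfl fun j _ => ?_
  rw [diag_apply, mul_apply, sum_eq_single j (fun l _ hlj => ?_) (by simp)]
  by_cases hp : p j ∨ p l
  · rw [hX l j hp.symm, mul_zero]
  · rw [not_or] at hp
    rw [hA j l (Ne.symm hlj) hp.1 hp.2, zero_mul]

def IsStaircaseBlock {n : ℕ} (A : Matrix (Fin n) (Fin n) ℝ) (s m : ℕ) : Prop :=
  (∀ j : Fin n, s ≤ j → j < s + m → A j j = 1) ∧
  (∀ j l : Fin n, j ≠ l → s ≤ j → s ≤ l → A j l = 0) ∧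
  (∀ j l : Fin n, s + m ≤ j → s + m ≤ l → A j l = 0)

theorem IsStaircaseBlock.trace_mul_eq_sum {n s m : ℕ} {A X : Matrix (Fin n) (Fin n) ℝ}
    (hA : IsStaircaseBlock A s m) (hX : X.PosSemidef) (hXs : ∀ j : Fin n, j < s → X j j = 0) :
    trace (A * X) = ∑ j ∈ univ.filter (fun j : Fin n => s ≤ j ∧ j < s + m), X j j := by
  obtain ⟨hdiag, hoff, hlow⟩ := hA
  have hvanish : ∀ j l : Fin n, j < s ∨ l < s → X j l = 0 := by
    rintro j l (hj | hl)
    · exact (hX.apply_eq_zero_of_diag_eq_zero (hXs j hj) l).2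
    · exact (hX.apply_eq_zero_of_diag_eq_zero (hXs l hl) j).1
  rw [trace_mul_eq_sum_diag_mul_diag (fun j : Fin n => (j : ℕ) < s) hvanish
    fun j l hjl hj hl => hoff j l hjl (not_lt.mp hj) (not_lt.mp hl), sum_filter]
  refine sum_congr rfl fun j _ => ?_
  by_cases hjs : (j : ℕ) < s
  · simp [hXs j hjs]
  by_cases hjm : (j : ℕ) < s + m
  · simp [hdiag j (not_lt.mp hjs) hjm, not_lt.mp hjs, hjm]
  · simp [hlow j j (not_lt.mp hjm) (not_lt.mp hjm), hjm]

theorem diag_eq_zero_of_staircase {n k : ℕ} {r : ℕ → ℕ} {A : ℕ → Matrix (Fin n) (Fin n) ℝ}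
    {X : Matrix (Fin n) (Fin n) ℝ} (hX : X.PosSemidef)
    (hA : ∀ i < k, IsStaircaseBlock (A i) (∑ t ∈ range i, r t) (r i))
    (htr : ∀ i < k, trace (A i * X) = 0) :
    ∀ j : Fin n, j < ∑ t ∈ range k, r t → X j j = 0 := by
  induction k with
  | zero => simp
  | succ k ih =>
    have hprev := ih (fun i hi => hA i (by omega)) (fun i hi => htr i (by omega))
    have hblock := (hA k k.lt_succ_self).trace_mul_eq_sum hX hprev
    rw [htr k k.lt_succ_self, eq_comm] at hblock
    intro j hj
    rw [sum_range_succ] at hj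
    by_cases hjk : j < ∑ t ∈ range k, r t
    · exact hprev j hjk
    · exact (sum_eq_zero_iff_of_nonneg fun _ _ => hX.diag_nonneg).mp hblock j
        (mem_filter.mpr ⟨mem_univ j, not_lt.mp hjk, hj⟩)

open Finset in
theorem staircase_system_infeasible_general (n k : ℕ) (r : ℕ → ℕ)
    (A : ℕ → Matrix (Fin n) (Fin n) ℝ)
    (hdiag : ∀ i ≤ k, ∀ j : Fin n,
      ∑ t ∈ Finset.range i, r t ≤ (j : ℕ) →
      (j : ℕ) < ∑ t ∈ Finset.range i, r t + r i → A i j j = 1)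
    (hoff : ∀ i ≤ k, ∀ j l : Fin n, j ≠ l →
      ∑ t ∈ Finset.range i, r t ≤ (j : ℕ) →
      ∑ t ∈ Finset.range i, r t ≤ (l : ℕ) → A i j l = 0)
    (hlow : ∀ i ≤ k, ∀ j l : Fin n,
      ∑ t ∈ Finset.range i, r t + r i ≤ (j : ℕ) →
      ∑ t ∈ Finset.range i, r t + r i ≤ (l : ℕ) → A i j l = 0) :
    ¬ ∃ X : Matrix (Fin n) (Fin n) ℝ, X.PosSemidef ∧
      (∀ i < k, Matrix.trace (A i * X) = 0) ∧
      Matrix.trace (A k * X) = -1 := by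
  rintro ⟨X, hX, hzero, hneg⟩
  have hA : ∀ i ≤ k, IsStaircaseBlock (A i) (∑ t ∈ range i, r t) (r i) :=
    fun i hi => ⟨hdiag i hi, hoff i hi, hlow i hi⟩
  have hprev := diag_eq_zero_of_staircase hX (fun i hi => hA i hi.le) hzero
  have hlast : 0 ≤ trace (A k * X) := by
    rw [(hA k le_rfl).trace_mul_eq_sum hX hprev]
    exact sum_nonneg fun _ _ => hX.diag_nonneg
  linarith

open Finset in
theorem staircase_system_infeasible (n k : ℕ) (r : ℕ → ℕ)
    (A : ℕ → Matrix (Fin n) (Fin n) ℝ)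
    (hrpos : ∀ i < k, 0 < r i)
    (hsum : ∑ t ∈ Finset.range (k + 1), r t ≤ n)
    (hsymm : ∀ i ≤ k, (A i).IsSymm)
    (hdiag : ∀ i ≤ k, ∀ j : Fin n,
      ∑ t ∈ Finset.range i, r t ≤ (j : ℕ) →
      (j : ℕ) < ∑ t ∈ Finset.range i, r t + r i → A i j j = 1)
    (hoff : ∀ i ≤ k, ∀ j l : Fin n, j ≠ l →
      ∑ t ∈ Finset.range i, r t ≤ (j : ℕ) →
      ∑ t ∈ Finset.range i, r t ≤ (l : ℕ) → A i j l = 0)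
    (hlow : ∀ i ≤ k, ∀ j l : Fin n,
      ∑ t ∈ Finset.range i, r t + r i ≤ (j : ℕ) →
      ∑ t ∈ Finset.range i, r t + r i ≤ (l : ℕ) → A i j l = 0) :
    ¬ ∃ X : Matrix (Fin n) (Fin n) ℝ, X.PosSemidef ∧
      (∀ i < k, Matrix.trace (A i * X) = 0) ∧
      Matrix.trace (A k * X) = -1 :=
  staircase_system_infeasible_general n k r A hdiag hoff hlow
end

section
/- The example system is infeasible: there is no positive semidefinite 3×3 real matrix X with X₁₁ = 0 and 2·X₁₃ + X₂₂ = −1 (i.e. A₁ • X = 0 and A₂ • X = −1 where A₁ = E₁₁ and A₂ has ones in positions (1,3), (3,1), (2,2)). -/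
/-!
A zero diagonal entry of a positive semidefinite matrix forces its whole row and column to
vanish (`x ↦ xᴴ X x` vanishes at a basis vector, hence so does `X x`). So `X₁₁ = 0` gives
`X₁₃ = X₃₁ = 0`, and then `2 X₁₃ + X₂₂ = X₂₂ ≥ 0`.
-/

open scoped ComplexOrder

namespace Matrix.PosSemidef

variable {n 𝕜 : Type*} [Fintype n] [RCLike 𝕜] {A : Matrix n n 𝕜}

theorem apply_eq_zero_of_diag_eq_zero_right (hA : A.PosSemidef) {i : n} (hi : A i i = 0)
    (j : n) : A j i = 0 := by
  classical
  have hcol : A *ᵥ Pi.single i 1 = 0 :=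
    (hA.dotProduct_mulVec_zero_iff _).1 (by simp [hi])
  simpa using congrFun hcol j

theorem apply_eq_zero_of_diag_eq_zero_left (hA : A.PosSemidef) {i : n} (hi : A i i = 0)
    (j : n) : A i j = 0 := by
  rw [← hA.isHermitian.apply i j, hA.apply_eq_zero_of_diag_eq_zero_right hi j, star_zero]

end Matrix.PosSemidef

theorem example_system_infeasible :
    ¬ ∃ X : Matrix (Fin 3) (Fin 3) ℝ, X.PosSemidef ∧
      Matrix.trace ((!![1,0,0; 0,0,0; 0,0,0] : Matrix (Fin 3) (Fin 3) ℝ) * X) = 0 ∧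
      Matrix.trace ((!![0,0,1; 0,1,0; 1,0,0] : Matrix (Fin 3) (Fin 3) ℝ) * X) = -1 := by
  rintro ⟨X, hX, h₁, h₂⟩
  have hX₀₀ : X 0 0 = 0 := by
    simpa [Matrix.trace_fin_three, Matrix.vecMul, dotProduct, Fin.sum_univ_three] using h₁
  have hX₂ : X 2 0 + X 1 1 + X 0 2 = -1 := by
    simpa [Matrix.trace_fin_three, Matrix.vecMul, dotProduct, Fin.sum_univ_three] using h₂
  have hX₂₀ := hX.apply_eq_zero_of_diag_eq_zero_right hX₀₀ 2
  have hX₀₂ := hX.apply_eq_zero_of_diag_eq_zero_left hX₀₀ 2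
  have hX₁₁ : 0 ≤ X 1 1 := hX.diag_nonneg
  linarith
end

section
/- If X is positive semidefinite and A is symmetric with A • X = 0 where the staircase matrix A has identity r×r upper-left block and zero lower-right (n−r)×(n−r) block, then for any symmetric B the value B • X depends only on the lower-right (n−r)×(n−r) block of B; in particular if B has identity block I_{r'} starting at row r and zeros in its lower-right block, B • X = 0 forces rows/columns r through r+r'−1 of X to also vanish. -/
/-!
A positive semidefinite matrix with a zero diagonal entry has that whole row and column zero.
For a 0/1 diagonal matrix `D`, `trace (D * X)` is a sum of nonnegative diagonal entries of `X`,
so `trace (D * X) = 0` kills the rows and columns of `X` selected by `D`. The staircase `A` is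
such a `D`, selecting the first `r` indices; hence `trace (B * X)` only sees the lower-right
block of `B`, where `B` agrees with the 0/1 diagonal matrix selecting `[r, r + r')`, and the same
argument applies again.
-/

open Matrix

open scoped ComplexOrder

namespace Matrix

variable {ι : Type*} [Fintype ι]

theorem trace_mul_eq_of_eq_on {R : Type*} [NonUnitalNonAssocSemiring R] (p : ι → Prop)
    {M N X : Matrix ι ι R} (hX : ∀ i j, ¬p i ∨ ¬p j → X i j = 0)
    (hMN : ∀ i j, p i → p j → M i j = N i j) : trace (M * X) = trace (N * X) := by
  simp only [trace, diag, mul_apply]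
  refine Finset.sum_congr rfl fun i _ => Finset.sum_congr rfl fun j _ => ?_
  by_cases hij : p i ∧ p j
  · rw [hMN i j hij.1 hij.2]
  · rw [hX j i (by tauto), mul_zero, mul_zero]

namespace PosSemidef

variable {𝕜 : Type*} [RCLike 𝕜] {X : Matrix ι ι 𝕜}

theorem col_eq_zero_of_diag_eq_zero (hX : X.PosSemidef) {i : ι} (hi : X i i = 0) (j : ι) :
    X j i = 0 := by
  classical
  have hquad : star (Pi.single i 1) ⬝ᵥ X *ᵥ Pi.single i (1 : 𝕜) = 0 := by
    simp [hi]
  simpa using congrFun ((hX.dotProduct_mulVec_zero_iff _).mp hquad) j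

theorem row_eq_zero_of_diag_eq_zero (hX : X.PosSemidef) {i : ι} (hi : X i i = 0) (j : ι) :
    X i j = 0 := by
  rw [← hX.isHermitian.apply i j, hX.col_eq_zero_of_diag_eq_zero hi j, star_zero]

theorem eq_zero_of_trace_diagonal_indicator_mul_eq_zero [DecidableEq ι] (hX : X.PosSemidef)
    (p : ι → Prop) [DecidablePred p]
    (h : trace (diagonal (fun i => if p i then 1 else 0) * X) = 0) {i j : ι} (hij : p i ∨ p j) :
    X i j = 0 := by
  have hsum : ∑ k ∈ Finset.univ.filter p, X k k = 0 := by
    simpa [trace, Finset.sum_filter] using h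
  have hdiag : ∀ k, p k → X k k = 0 := fun k hk =>
    (Finset.sum_eq_zero_iff_of_nonneg fun _ _ => hX.diag_nonneg).mp hsum k (by simpa using hk)
  rcases hij with hi | hj
  · exact hX.row_eq_zero_of_diag_eq_zero (hdiag i hi) j
  · exact hX.col_eq_zero_of_diag_eq_zero (hdiag j hj) i

end PosSemidef

end Matrix

theorem staircase_induction_step_general (n r r' : ℕ)
    (A B X : Matrix (Fin n) (Fin n) ℝ)
    (hAdiag : ∀ i : Fin n, (i : ℕ) < r → A i i = 1)
    (hAoff : ∀ i j : Fin n, i ≠ j → A i j = 0)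
    (hAlow : ∀ i j : Fin n, r ≤ (i : ℕ) → r ≤ (j : ℕ) → A i j = 0)
    (hX : X.PosSemidef) (htrA : Matrix.trace (A * X) = 0)
    (hBdiag : ∀ i : Fin n, r ≤ (i : ℕ) → (i : ℕ) < r + r' → B i i = 1)
    (hBoff : ∀ i j : Fin n, i ≠ j → r ≤ (i : ℕ) → r ≤ (j : ℕ) → B i j = 0)
    (hBlow : ∀ i j : Fin n, r + r' ≤ (i : ℕ) → r + r' ≤ (j : ℕ) → B i j = 0)
    (htrB : Matrix.trace (B * X) = 0) :
    (∀ B₁ B₂ : Matrix (Fin n) (Fin n) ℝ, B₁.IsSymm → B₂.IsSymm →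
      (∀ i j : Fin n, r ≤ (i : ℕ) → r ≤ (j : ℕ) → B₁ i j = B₂ i j) →
      Matrix.trace (B₁ * X) = Matrix.trace (B₂ * X)) ∧
    (∀ i j : Fin n,
      ((r ≤ (i : ℕ) ∧ (i : ℕ) < r + r') ∨ (r ≤ (j : ℕ) ∧ (j : ℕ) < r + r')) →
      X i j = 0) := by
  have hA : A = diagonal fun i : Fin n => if (i : ℕ) < r then 1 else 0 := by
    ext i j
    by_cases hij : i = j
    · subst hij
      by_cases hi : (i : ℕ) < r
      · simp [hi, hAdiag i hi]
      · simp [hi, hAlow i i (not_lt.mp hi) (not_lt.mp hi)]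
    · simp [hij, hAoff i j hij]
  have hXtop : ∀ i j : Fin n, (i : ℕ) < r ∨ (j : ℕ) < r → X i j = 0 := fun _ _ =>
    hX.eq_zero_of_trace_diagonal_indicator_mul_eq_zero _ (hA ▸ htrA)
  have hcongr : ∀ M N : Matrix (Fin n) (Fin n) ℝ,
      (∀ i j : Fin n, r ≤ (i : ℕ) → r ≤ (j : ℕ) → M i j = N i j) →
      trace (M * X) = trace (N * X) := fun _ _ =>
    trace_mul_eq_of_eq_on (fun i : Fin n => r ≤ (i : ℕ)) fun i j hij => hXtop i j (by omega)
  refine ⟨fun B₁ B₂ _ _ => hcongr B₁ B₂, ?_⟩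
  have hband :
      trace (diagonal (fun i : Fin n => if r ≤ (i : ℕ) ∧ (i : ℕ) < r + r' then 1 else 0) * X)
        = 0 := by
    refine (hcongr _ B fun i j hi hj => ?_).trans htrB
    by_cases hij : i = j
    · subst hij
      by_cases hi' : (i : ℕ) < r + r'
      · simp [hi, hi', hBdiag i hi hi']
      · simp [hi', hBlow i i (not_lt.mp hi') (not_lt.mp hi')]
    · simp [hij, hBoff i j hij hi hj]
  exact fun i j => hX.eq_zero_of_trace_diagonal_indicator_mul_eq_zero _ hband

theorem staircase_induction_step (n r r' : ℕ)
    (A B X : Matrix (Fin n) (Fin n) ℝ)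
    (hAdiag : ∀ i : Fin n, (i : ℕ) < r → A i i = 1)
    (hAoff : ∀ i j : Fin n, i ≠ j → A i j = 0)
    (hAlow : ∀ i j : Fin n, r ≤ (i : ℕ) → r ≤ (j : ℕ) → A i j = 0)
    (hX : X.PosSemidef) (htrA : Matrix.trace (A * X) = 0)
    (hB : B.IsSymm)
    (hBdiag : ∀ i : Fin n, r ≤ (i : ℕ) → (i : ℕ) < r + r' → B i i = 1)
    (hBoff : ∀ i j : Fin n, i ≠ j → r ≤ (i : ℕ) → r ≤ (j : ℕ) → B i j = 0)
    (hBlow : ∀ i j : Fin n, r + r' ≤ (i : ℕ) → r + r' ≤ (j : ℕ) → B i j = 0)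
    (htrB : Matrix.trace (B * X) = 0) :
    (∀ B₁ B₂ : Matrix (Fin n) (Fin n) ℝ, B₁.IsSymm → B₂.IsSymm →
      (∀ i j : Fin n, r ≤ (i : ℕ) → r ≤ (j : ℕ) → B₁ i j = B₂ i j) →
      Matrix.trace (B₁ * X) = Matrix.trace (B₂ * X)) ∧
    (∀ i j : Fin n,
      ((r ≤ (i : ℕ) ∧ (i : ℕ) < r + r') ∨ (r ≤ (j : ℕ) ∧ (j : ℕ) < r + r')) →
      X i j = 0) :=
  staircase_induction_step_general n r r' A B X hAdiag hAoff hAlow hX htrA hBdiag hBoff hBlow htrB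
end

section
/- A feasible solution certificate for maximum rank: if the system A_i • X = b_i (i=1,…,m), X ⪰ 0 contains among its constraints the staircase equations A_i • X = 0 (i=1,…,k) of Theorem 1.2 with r_1 + ⋯ + r_k = n − p, then every feasible X has rank at most p. -/
/-!
Once the rows and columns of `X` before the `i`-th block vanish, the `i`-th staircase constraint
says exactly that the diagonal entries of `X` on that block sum to zero. These entries are
nonnegative since `X ⪰ 0`, so they vanish, and a zero diagonal entry of a positive semidefinite
matrix kills its whole row and column. By induction over the blocks the first `n - p` rows of `X`
vanish, so `X` has at most `p` nonzero rows.
-/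

open Finset
open scoped ComplexOrder

namespace Matrix

section PosSemidef

variable {n 𝕜 : Type*} [Fintype n] [RCLike 𝕜] {A : Matrix n n 𝕜}

theorem PosSemidef.col_eq_zero_of_diag_eq_zero_s16 (hA : A.PosSemidef) {j : n} (hj : A j j = 0) :
    A.col j = 0 := by
  classical
  rw [← mulVec_single_one, ← hA.dotProduct_mulVec_zero_iff]
  simpa [mulVec_single_one, single_dotProduct] using hj

theorem PosSemidef.row_eq_zero_of_diag_eq_zero_s16 (hA : A.PosSemidef) {j : n} (hj : A j j = 0) :
    A.row j = 0 := by
  ext l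
  have hlj : A l j = 0 := congrFun (hA.col_eq_zero_of_diag_eq_zero_s16 hj) l
  rw [row_apply, ← hA.isHermitian.apply, hlj, star_zero, Pi.zero_apply]

end PosSemidef

theorem trace_mul_eq_sum_diag_mul_diag_s16 {n R : Type*} [Fintype n] [NonUnitalNonAssocSemiring R]
    {A B : Matrix n n R} (h : ∀ i j, i ≠ j → A i j * B j i = 0) :
    trace (A * B) = ∑ i, A i i * B i i :=
  Fintype.sum_congr _ _ fun i => Fintype.sum_eq_single i fun j hj => h i j (Ne.symm hj)

theorem PosSemidef.diag_eq_zero_of_trace_staircase_mul_eq_zero {n s r : ℕ}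
    {A X : Matrix (Fin n) (Fin n) ℝ} (hX : X.PosSemidef)
    (hXs : ∀ j : Fin n, (j : ℕ) < s → X j j = 0)
    (hdiag : ∀ j : Fin n, s ≤ (j : ℕ) → (j : ℕ) < s + r → A j j = 1)
    (hoff : ∀ j l : Fin n, j ≠ l → s ≤ (j : ℕ) → s ≤ (l : ℕ) → A j l = 0)
    (hlow : ∀ j : Fin n, s + r ≤ (j : ℕ) → A j j = 0)
    (htr : trace (A * X) = 0) {j : Fin n} (hj : (j : ℕ) < s + r) : X j j = 0 := by
  have hXrow {l : Fin n} (hl : (l : ℕ) < s) : X.row l = 0 :=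
    hX.row_eq_zero_of_diag_eq_zero_s16 (hXs l hl)
  have hXcol {l : Fin n} (hl : (l : ℕ) < s) : X.col l = 0 :=
    hX.col_eq_zero_of_diag_eq_zero_s16 (hXs l hl)
  have htr_diag : trace (A * X) = ∑ i, A i i * X i i := by
    refine trace_mul_eq_sum_diag_mul_diag_s16 fun i l hil => ?_
    by_cases hi : (i : ℕ) < s
    · rw [← col_apply X i l, hXcol hi, Pi.zero_apply, mul_zero]
    by_cases hl : (l : ℕ) < s
    · rw [← row_apply X l i, hXrow hl, Pi.zero_apply, mul_zero]
    rw [hoff i l hil (not_lt.mp hi) (not_lt.mp hl), zero_mul]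
  have hterm_nonneg (i : Fin n) : 0 ≤ A i i * X i i := by
    by_cases hi : (i : ℕ) < s
    · rw [hXs i hi, mul_zero]
    by_cases hir : (i : ℕ) < s + r
    · rw [hdiag i (not_lt.mp hi) hir, one_mul]
      exact hX.diag_nonneg
    · rw [hlow i (not_lt.mp hir), zero_mul]
  have hterm := (Fintype.sum_eq_zero_iff_of_nonneg hterm_nonneg).mp (htr_diag ▸ htr)
  by_cases hjs : (j : ℕ) < s
  · exact hXs j hjs
  simpa [hdiag j (not_lt.mp hjs) hj] using congrFun hterm j

theorem PosSemidef.rank_le_of_diag_eq_zero {n p : ℕ} {X : Matrix (Fin n) (Fin n) ℝ}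
    (hX : X.PosSemidef) (hXp : ∀ j : Fin n, (j : ℕ) < n - p → X j j = 0) : X.rank ≤ p := by
  classical
  calc X.rank ≤ #{j : Fin n | ¬ (j : ℕ) < n - p} := by
        refine X.rank_le_card_of_support_subset _ fun j hj =>
          mem_filter.mpr ⟨mem_univ j, fun hjp =>
            hj (hX.row_eq_zero_of_diag_eq_zero_s16 (hXp j hjp))⟩
    _ ≤ p := by
        have := card_filter_add_card_filter_not (s := univ) (fun j : Fin n => (j : ℕ) < n - p)
        rw [Fin.card_filter_val_lt, card_univ, Fintype.card_fin] at this
        omega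

end Matrix

open Finset in
theorem rank_bound_from_staircase_general (n m k p : ℕ) (hk : k ≤ m)
    (r : ℕ → ℕ)
    (A : Fin m → Matrix (Fin n) (Fin n) ℝ) (b : Fin m → ℝ)
    (hsum : ∑ t ∈ Finset.range k, r t = n - p)
    (hb : ∀ i : Fin m, (i : ℕ) < k → b i = 0)
    (hdiag : ∀ i : Fin m, (i : ℕ) < k → ∀ j : Fin n,
      ∑ t ∈ Finset.range (i : ℕ), r t ≤ (j : ℕ) →
      (j : ℕ) < ∑ t ∈ Finset.range (i : ℕ), r t + r i → A i j j = 1)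
    (hoff : ∀ i : Fin m, (i : ℕ) < k → ∀ j l : Fin n, j ≠ l →
      ∑ t ∈ Finset.range (i : ℕ), r t ≤ (j : ℕ) →
      ∑ t ∈ Finset.range (i : ℕ), r t ≤ (l : ℕ) → A i j l = 0)
    (hlow : ∀ i : Fin m, (i : ℕ) < k → ∀ j l : Fin n,
      ∑ t ∈ Finset.range (i : ℕ), r t + r i ≤ (j : ℕ) →
      ∑ t ∈ Finset.range (i : ℕ), r t + r i ≤ (l : ℕ) → A i j l = 0)
    (X : Matrix (Fin n) (Fin n) ℝ) (hX : X.PosSemidef)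
    (hfeas : ∀ i, Matrix.trace (A i * X) = b i) :
    X.rank ≤ p := by
  have hstair : ∀ i ≤ k, ∀ j : Fin n, (j : ℕ) < ∑ t ∈ range i, r t → X j j = 0 := by
    intro i
    induction i with
    | zero => simp
    | succ i ih =>
      intro hi j hj
      let I : Fin m := ⟨i, by omega⟩
      have hI : (I : ℕ) < k := hi
      rw [sum_range_succ] at hj
      exact hX.diag_eq_zero_of_trace_staircase_mul_eq_zero (ih hI.le) (hdiag I hI) (hoff I hI)
        (fun j hj => hlow I hI j j hj hj) (by rw [hfeas, hb I hI]) hj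
  exact hX.rank_le_of_diag_eq_zero (hsum ▸ hstair k le_rfl)

open Finset in
theorem rank_bound_from_staircase (n m k p : ℕ) (hk : k ≤ m)
    (r : ℕ → ℕ)
    (A : Fin m → Matrix (Fin n) (Fin n) ℝ) (b : Fin m → ℝ)
    (hrpos : ∀ i < k, 0 < r i)
    (hsum : ∑ t ∈ Finset.range k, r t = n - p) (hp : p ≤ n)
    (hb : ∀ i : Fin m, (i : ℕ) < k → b i = 0)
    (hdiag : ∀ i : Fin m, (i : ℕ) < k → ∀ j : Fin n,
      ∑ t ∈ Finset.range (i : ℕ), r t ≤ (j : ℕ) →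
      (j : ℕ) < ∑ t ∈ Finset.range (i : ℕ), r t + r i → A i j j = 1)
    (hoff : ∀ i : Fin m, (i : ℕ) < k → ∀ j l : Fin n, j ≠ l →
      ∑ t ∈ Finset.range (i : ℕ), r t ≤ (j : ℕ) →
      ∑ t ∈ Finset.range (i : ℕ), r t ≤ (l : ℕ) → A i j l = 0)
    (hlow : ∀ i : Fin m, (i : ℕ) < k → ∀ j l : Fin n,
      ∑ t ∈ Finset.range (i : ℕ), r t + r i ≤ (j : ℕ) →
      ∑ t ∈ Finset.range (i : ℕ), r t + r i ≤ (l : ℕ) → A i j l = 0)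
    (X : Matrix (Fin n) (Fin n) ℝ) (hX : X.PosSemidef)
    (hfeas : ∀ i, Matrix.trace (A i * X) = b i) :
    X.rank ≤ p :=
  rank_bound_from_staircase_general n m k p hk r A b hsum hb hdiag hoff hlow X hX hfeas
end

section
/- A single-constraint system A • X = b, X ⪰ 0 (A symmetric) is infeasible if and only if (b > 0 and A is negative semidefinite) or (b < 0 and A is positive semidefinite) or (b ≠ 0 and A = 0). -/
open Matrix

lemma psd_trace_nonneg {n : ℕ} {M : Matrix (Fin n) (Fin n) ℝ} (hM : M.PosSemidef) :
    0 ≤ Matrix.trace M := by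
  rw [Matrix.trace]
  refine Finset.sum_nonneg fun i _ => ?_
  have := hM.dotProduct_mulVec_nonneg (Pi.single i 1)
  simpa [Matrix.mulVec, dotProduct, Pi.single_apply] using this

lemma psd_vecMulVec {n : ℕ} (v : Fin n → ℝ) : (Matrix.vecMulVec v v).PosSemidef := by
  rw [Matrix.vecMulVec_eq (Fin 1)]
  have := Matrix.posSemidef_self_mul_conjTranspose (Matrix.replicateCol (Fin 1) v)
  convert this using 1
  ext i j
  simp [Matrix.mul_apply]

lemma trace_mul_vecMulVec {n : ℕ} (A : Matrix (Fin n) (Fin n) ℝ) (v : Fin n → ℝ) :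
    Matrix.trace (A * Matrix.vecMulVec v v) = v ⬝ᵥ A *ᵥ v := by
  simp [Matrix.trace, Matrix.mul_apply, Matrix.vecMulVec, dotProduct, Matrix.mulVec,
    Finset.mul_sum, Finset.sum_mul, mul_comm, mul_assoc, mul_left_comm]

lemma trace_mul_psd_nonneg {n : ℕ} {A X : Matrix (Fin n) (Fin n) ℝ}
    (hA : A.PosSemidef) (hX : X.PosSemidef) : 0 ≤ Matrix.trace (A * X) := by
  obtain ⟨B, rfl⟩ : ∃ B : Matrix (Fin n) (Fin n) ℝ, X = Bᴴ * B := by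
    open scoped MatrixOrder in
    obtain ⟨Y, hY, -, rfl⟩ := CFC.exists_sqrt_of_isSelfAdjoint_of_quasispectrumRestricts
      (sub_zero X ▸ hX.isHermitian) (QuasispectrumRestricts.nnreal_of_nonneg hX.nonneg)
    exact ⟨Y, by rw [← star_eq_conjTranspose, hY.star_eq]⟩
  have h1 : Matrix.trace (A * (Bᴴ * B)) = Matrix.trace (B * A * Bᴴ) := by
    rw [← Matrix.mul_assoc, Matrix.trace_mul_comm, ← Matrix.mul_assoc]
  rw [h1]
  exact psd_trace_nonneg (hA.mul_mul_conjTranspose_same B)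

theorem single_constraint_infeasibility (n : ℕ)
    (A : Matrix (Fin n) (Fin n) ℝ) (hA : A.IsSymm) (b : ℝ) :
    (¬ ∃ X : Matrix (Fin n) (Fin n) ℝ, X.PosSemidef ∧ Matrix.trace (A * X) = b) ↔
    ((b > 0 ∧ (-A).PosSemidef) ∨ (b < 0 ∧ A.PosSemidef) ∨ (b ≠ 0 ∧ A = 0)) := by
  have hHerm : A.IsHermitian := by
    rwa [Matrix.IsHermitian, Matrix.conjTranspose_eq_transpose_of_trivial, ← Matrix.IsSymm]
  constructor
  · intro h
    have hb : b ≠ 0 := by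
      rintro rfl
      exact h ⟨0, Matrix.PosSemidef.zero, by simp⟩
    rcases lt_or_gt_of_ne hb with hb' | hb'
    · right; left
      refine ⟨hb', Matrix.posSemidef_iff_dotProduct_mulVec.mpr ⟨hHerm, fun x => ?_⟩⟩
      by_contra hx
      push_neg at hx
      set c : ℝ := star x ⬝ᵥ A *ᵥ x with hc
      have hxc : star x = x := rfl
      have hcneg : c < 0 := hx
      refine h ⟨(b / c) • Matrix.vecMulVec x x, ?_, ?_⟩
      · have hps := psd_vecMulVec x
        have hbc : 0 ≤ b / c := le_of_lt (div_pos_of_neg_of_neg hb' hcneg)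
        refine Matrix.posSemidef_iff_dotProduct_mulVec.mpr ⟨?_, fun y => ?_⟩
        · rw [Matrix.IsHermitian, Matrix.conjTranspose_smul]
          congr 1
          ext i j
          simp [Matrix.vecMulVec, Matrix.transpose_apply, mul_comm]
        · have := hps.dotProduct_mulVec_nonneg y
          simpa [Matrix.smul_mulVec, dotProduct_smul] using
            mul_nonneg hbc this
      · rw [Matrix.mul_smul, Matrix.trace_smul, smul_eq_mul, trace_mul_vecMulVec]
        rw [hxc] at hc
        rw [← hc]
        exact div_mul_cancel₀ b (ne_of_lt hcneg)
    · left
      refine ⟨hb', ?_⟩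
      have hnegHerm : (-A).IsHermitian := hHerm.neg
      refine Matrix.posSemidef_iff_dotProduct_mulVec.mpr ⟨hnegHerm, fun x => ?_⟩
      by_contra hx
      push_neg at hx
      have hxc : star x = x := rfl
      set c : ℝ := x ⬝ᵥ A *ᵥ x with hc
      have hcpos : 0 < c := by
        have : x ⬝ᵥ (-A) *ᵥ x < 0 := by rwa [hxc] at hx
        simpa [hc, Matrix.neg_mulVec] using this
      refine h ⟨(b / c) • Matrix.vecMulVec x x, ?_, ?_⟩
      · have hps := psd_vecMulVec x
        have hbc : 0 ≤ b / c := le_of_lt (div_pos hb' hcpos)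
        refine Matrix.posSemidef_iff_dotProduct_mulVec.mpr ⟨?_, fun y => ?_⟩
        · rw [Matrix.IsHermitian, Matrix.conjTranspose_smul]
          congr 1
          ext i j
          simp [Matrix.vecMulVec, Matrix.transpose_apply, mul_comm]
        · have := hps.dotProduct_mulVec_nonneg y
          simpa [Matrix.smul_mulVec, dotProduct_smul] using
            mul_nonneg hbc this
      · rw [Matrix.mul_smul, Matrix.trace_smul, smul_eq_mul, trace_mul_vecMulVec, ← hc]
        exact div_mul_cancel₀ b (ne_of_gt hcpos)
  · rintro (⟨hb, hnA⟩ | ⟨hb, hA'⟩ | ⟨hb, rfl⟩) ⟨X, hX, htr⟩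
    · have : 0 ≤ Matrix.trace ((-A) * X) := trace_mul_psd_nonneg hnA hX
      rw [Matrix.neg_mul, Matrix.trace_neg, htr] at this
      linarith
    · have : 0 ≤ Matrix.trace (A * X) := trace_mul_psd_nonneg hA' hX
      rw [htr] at this
      linarith
    · simp at htr
      exact hb htr.symm
end
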